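/- For every n ≥ 1 there exists a normal natural deduction proof of φ_n in M→ whose last rule is an →-introduction discharging exactly 2^n occurrences of the assumption ξ_n. -/
import Mathlib


/-- Formulas of purely implicational logic, built from atoms (numbered by `ℕ`)
by the single connective `→` (`impl`). -/
inductive Fm : Type
  | atom : ℕ → Fm
  | impl : Fm → Fm → Fm
deriving DecidableEq

/-- χ[X,Y] = (((X → Y) → X) → X) → Y. -/
def chi (X Y : Fm) : Fm := (((X.impl Y).impl X).impl X).impl Y

/-- The atom `Fm.atom 0` is C, and `Fm.atom k` is D_k for k ≥ 1.
ξ₁ = χ[D₁, C] and ξ_{i+1} = χ[D_{i+1}, ξ_i]  (the value at 0 is irrelevant). -/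
def xi : ℕ → Fm
  | 0 => chi (.atom 1) (.atom 0)
  | 1 => chi (.atom 1) (.atom 0)
  | n + 2 => chi (.atom (n + 2)) (xi (n + 1))

/-- φ_n = ξ_n → C. -/
def phi (n : ℕ) : Fm := (xi n).impl (.atom 0)

/-- Natural deduction derivations for M→, indexed by the multiset of open
assumption occurrences and the conclusion.  `assume a` is a one-occurrence
assumption of `a`; `intro n` is →-introduction discharging exactly `n`
occurrences of the assumption `a`; `elim` is →-elimination whose second
premise (the implication) is the major premise. -/
inductive Deriv : Multiset Fm → Fm → Type
  | assume (a : Fm) : Deriv {a} a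
  | intro {Γ : Multiset Fm} {a b : Fm} (n : ℕ)
      (d : Deriv (Γ + Multiset.replicate n a) b) : Deriv Γ (a.impl b)
  | elim {Γ Δ : Multiset Fm} {a b : Fm}
      (minor : Deriv Γ a) (major : Deriv Δ (a.impl b)) : Deriv (Γ + Δ) b

/-- The last rule of the derivation is an →-introduction. -/
def Deriv.isIntro : ∀ {Γ b}, Deriv Γ b → Prop
  | _, _, .intro _ _ => True
  | _, _, _ => False

/-- A derivation is normal if no formula occurrence is both the conclusion of
an →-introduction and the major premise of an →-elimination. -/
def Deriv.normal : ∀ {Γ b}, Deriv Γ b → Prop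
  | _, _, .assume _ => True
  | _, _, .intro _ d => d.normal
  | _, _, .elim minor major => minor.normal ∧ major.normal ∧ ¬ major.isIntro


structure ND (Γ : Multiset Fm) (b : Fm) where
  d : Deriv Γ b
  norm : d.normal
  notIntro : ¬ d.isIntro

def ND.cast {Γ Γ' : Multiset Fm} {b : Fm} (h : Γ = Γ') (p : ND Γ b) : ND Γ' b := h ▸ p

def Deriv.castCtx {Γ Γ' : Multiset Fm} {b : Fm} (h : Γ = Γ') (d : Deriv Γ b) : Deriv Γ' b := h ▸ d

theorem Deriv.castCtx_normal {Γ Γ' : Multiset Fm} {b : Fm} (h : Γ = Γ') (d : Deriv Γ b) :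
    (d.castCtx h).normal ↔ d.normal := by subst h; rfl

def step {X Y : Fm} {Γ : Multiset Fm} (p : ND Γ (chi X Y)) : ND (Γ + Γ) Y := by
  set A : Fm := (X.impl Y).impl X with hA
  let d1 : Deriv {X} (A.impl X) :=
    .intro 0 ((Deriv.assume X).castCtx (by simp))
  let d2 : Deriv ({X} + Γ) Y := .elim d1 p.d
  let d3 : Deriv Γ (X.impl Y) := .intro 1 (d2.castCtx (by rw [Multiset.replicate_one]; exact add_comm _ _))
  let d4 : Deriv (Γ + {A}) X := .elim d3 (.assume A)
  let d5 : Deriv Γ (A.impl X) := .intro 1 (d4.castCtx (by rw [Multiset.replicate_one]))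
  refine ⟨.elim d5 p.d, ?_, fun h => h⟩
  show Deriv.normal _
  simp only [d5, d4, d3, d2, d1, Deriv.normal, Deriv.castCtx_normal, Deriv.isIntro]
  exact ⟨⟨⟨trivial, p.norm, p.notIntro⟩, trivial, fun h => h⟩, p.norm, p.notIntro⟩

def descend : (k : ℕ) → {Γ : Multiset Fm} → ND Γ (xi (k + 1)) → ND ((2 ^ (k + 1)) • Γ) (.atom 0)
  | 0, Γ, p => (step (X := .atom 1) (Y := .atom 0) p).cast (by rw [pow_one, two_nsmul])
  | k + 1, Γ, p =>
      (descend k (step (X := .atom (k + 2)) (Y := xi (k + 1)) p)).cast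
        (by rw [← two_nsmul, ← mul_nsmul', ← pow_succ])

/-- for every n ≥ 1 there is a normal proof of φ_n (a derivation
with no open assumptions) whose last rule is an →-introduction discharging
exactly 2^n occurrences of the assumption ξ_n. -/
theorem normal_proof_phi_two_pow (n : ℕ) (hn : 1 ≤ n) :
    ∃ d : Deriv ((0 : Multiset Fm) + Multiset.replicate (2 ^ n) (xi n)) (.atom 0),
      ∃ p : Deriv 0 (phi n), p = Deriv.intro (2 ^ n) d ∧ p.normal := by
  obtain ⟨m, rfl⟩ := Nat.exists_eq_add_of_le hn
  have base : ND {xi (1 + m)} (xi (1 + m)) := ⟨.assume _, trivial, fun h => h⟩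
  rw [add_comm 1 m] at *
  have res := (descend m base).cast (show _ = (0 : Multiset Fm) + Multiset.replicate (2 ^ (m+1)) (xi (m+1)) by
    rw [zero_add, Multiset.nsmul_singleton])
  exact ⟨res.d, .intro _ res.d, rfl, res.norm⟩
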